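/- Let $\delta \in (0,1)$, $C > 0$, and $c_1 \le (1-\delta)/(4C)$. Suppose $(B_k)_{k \ge 0}$ is a sequence of positive reals with $B_0 = 1$ satisfying $B_{k+1} \le B_k (1 + c_1 C B_k \delta^{k_0 - k})$ for all $0 \le k < k_0$. Then $B_k \le 2$ for all $0 \le k \le k_0$. -/

import Mathlib

/-!
Each step adds at most `a B_k² δ^(k₀-k)` with `a = c₁ C`. As long as `B_k ≤ 2` this increment is at
most `4a δ^(k₀-k)`, and the geometric sum of these is at most `4a δ / (1 - δ) ≤ δ < 1`. The
bootstrap is closed by the invariant `B_k ≤ 1 + ε δ^(k₀-k+1)` with `ε = 4a / (1 - δ) ≤ 1`.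
-/

lemma le_one_add_mul_pow_of_quadratic_recursion {a δ : ℝ} {k₀ : ℕ} {B : ℕ → ℝ}
    (ha : 0 ≤ a) (hδ : δ ∈ Set.Ico 0 1) (haδ : 4 * a ≤ 1 - δ)
    (hB : ∀ k, 0 ≤ B k) (hB0 : B 0 ≤ 1)
    (hrec : ∀ k < k₀, B (k + 1) ≤ B k + a * B k ^ 2 * δ ^ (k₀ - k)) :
    ∀ k ≤ k₀, B k ≤ 1 + 4 * a / (1 - δ) * δ ^ (k₀ - k + 1) := by
  obtain ⟨hδ0, hδ1⟩ := hδ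
  have h1δ : 0 < 1 - δ := by linarith
  set ε := 4 * a / (1 - δ) with hε_def
  have hε0 : 0 ≤ ε := by positivity
  have hε1 : ε ≤ 1 := (div_le_one h1δ).2 haδ
  have hε : ε * (1 - δ) = 4 * a := div_mul_cancel₀ _ h1δ.ne'
  intro k
  induction k with
  | zero =>
    intro _
    have : 0 ≤ ε * δ ^ (k₀ - 0 + 1) := by positivity
    linarith
  | succ n ih =>
    intro hn
    have hBn := ih (by omega)
    have hBn_le_two : B n ≤ 2 := by
      have : ε * δ ^ (k₀ - n + 1) ≤ 1 := mul_le_one₀ hε1 (by positivity) (pow_le_one₀ hδ0 hδ1.le)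
      linarith
    have hsq : B n ^ 2 ≤ 4 := by nlinarith [hB n]
    have hexp : k₀ - (n + 1) + 1 = k₀ - n := by omega
    calc B (n + 1) ≤ B n + a * B n ^ 2 * δ ^ (k₀ - n) := hrec n hn
      _ ≤ B n + a * 4 * δ ^ (k₀ - n) := by gcongr
      _ ≤ 1 + ε * δ ^ (k₀ - n + 1) + ε * (1 - δ) * δ ^ (k₀ - n) := by rw [hε]; linarith
      _ = 1 + ε * δ ^ (k₀ - (n + 1) + 1) := by rw [hexp, pow_succ]; ring

lemma le_two_of_quadratic_recursion {a δ : ℝ} {k₀ : ℕ} {B : ℕ → ℝ}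
    (ha : 0 ≤ a) (hδ : δ ∈ Set.Ico 0 1) (haδ : 4 * a ≤ 1 - δ)
    (hB : ∀ k, 0 ≤ B k) (hB0 : B 0 ≤ 1)
    (hrec : ∀ k < k₀, B (k + 1) ≤ B k + a * B k ^ 2 * δ ^ (k₀ - k)) :
    ∀ k ≤ k₀, B k ≤ 2 := by
  intro k hk
  have hε1 : 4 * a / (1 - δ) ≤ 1 := (div_le_one (by linarith [hδ.2])).2 haδ
  have : 4 * a / (1 - δ) * δ ^ (k₀ - k + 1) ≤ 1 :=
    mul_le_one₀ hε1 (pow_nonneg hδ.1 _) (pow_le_one₀ hδ.1 hδ.2.le)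
  linarith [le_one_add_mul_pow_of_quadratic_recursion ha hδ haδ hB hB0 hrec k hk]

theorem stmt_0 (δ C c₁ : ℝ) (hδ : δ ∈ Set.Ioo (0:ℝ) 1) (hC : 0 < C)
    (hc₁ : c₁ ≤ (1 - δ) / (4 * C)) (k₀ : ℕ) (B : ℕ → ℝ)
    (hBpos : ∀ k, 0 < B k) (hB0 : B 0 = 1)
    (hrec : ∀ k, k < k₀ → B (k + 1) ≤ B k * (1 + c₁ * C * B k * δ ^ (k₀ - k))) :
    ∀ k ≤ k₀, B k ≤ 2 := by
  -- a negative `c₁` only helps, so we may replace it by `max c₁ 0`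
  have hc : max c₁ 0 * C ≤ (1 - δ) / 4 := by
    rw [← le_div_iff₀ hC, div_div]
    exact max_le hc₁ (div_nonneg (by linarith [hδ.2]) (by positivity))
  refine le_two_of_quadratic_recursion (a := max c₁ 0 * C) (by positivity) (Set.Ioo_subset_Ico_self hδ)
    (by linarith) (fun k => (hBpos k).le) hB0.le fun k hk => ?_
  have hpos : 0 ≤ C * B k ^ 2 * δ ^ (k₀ - k) := by have := hδ.1; positivity
  calc B (k + 1) ≤ B k * (1 + c₁ * C * B k * δ ^ (k₀ - k)) := hrec k hk
    _ = B k + c₁ * (C * B k ^ 2 * δ ^ (k₀ - k)) := by ring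
    _ ≤ B k + max c₁ 0 * (C * B k ^ 2 * δ ^ (k₀ - k)) := by gcongr; exact le_max_left _ _
    _ = B k + max c₁ 0 * C * B k ^ 2 * δ ^ (k₀ - k) := by ring
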